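/- arXiv:1706.04637 — 2 statements merged into one kernel-verified Lean document; each statement's English description precedes it below -/
import Mathlib

section
/- Assume both the buyer distribution and the seller distribution are regular. Then for every bilateral trading mechanism M = (x, p^B, p^S) that is IR, BIC and ex-ante WBB, GFT(M) ≤ Σ_{b,s} f(b)·g(s)·(b − s)·𝟙[φ(b) > s] + Σ_{b,s} f(b)·g(s)·(b − s)·𝟙[b > τ(s)]; that is, the sum of the gains from trade of the Seller-Offering Mechanism and of the Buyer-Offering Mechanism is at least GFT(M). -/
/-!
Myerson's lemma in inequality form: chaining the constraints "buyer type `r + 1` does not mimic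
type `r`" from the IR constraint of the lowest type bounds the buyer's expected payment by the
expected virtual value `E[φ(b) x]`; symmetrically the seller receives at least `E[τ(s) x]`.
Weak budget balance then gives `E[τ(s) x] ≤ E[φ(b) x]`, hence
`GFT = E[(φ(b) - s) x] + E[(b - τ(s)) x] - E[(φ(b) - τ(s)) x] ≤ E[(φ(b) - s) x] + E[(b - τ(s)) x]`,
and as `φ(b) ≤ b`, `s ≤ τ(s)` and `0 ≤ x ≤ 1`, the two terms are at most the gains from trade of
the seller-offering and the buyer-offering mechanism.
-/

open Finset

/-- Buyer's Myerson virtual value: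
`φ(β_r) = β_r − (β_{r+1} − β_r)·(Σ_{l>r} f(β_l))/f(β_r)` for `r < K-1`, `φ(β_{K-1}) = β_{K-1}`. -/
noncomputable def buyerVirtual (K : ℕ) (β f : Fin K → ℝ) (r : Fin K) : ℝ :=
  β r - ((if h : (r : ℕ) + 1 < K then β ⟨(r : ℕ) + 1, h⟩ else β r) - β r)
      * (∑ l ∈ Finset.Ioi r, f l) / f r

/-- Seller's Myerson virtual value:
`τ(α_1) = α_1`, `τ(α_r) = α_r + (α_r − α_{r−1})·(Σ_{l<r} g(α_l))/g(α_r)` for `r > 1`. -/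
noncomputable def sellerVirtual (K' : ℕ) (α g : Fin K' → ℝ) (r : Fin K') : ℝ :=
  α r + (α r - (if 0 < (r : ℕ) then
        α ⟨(r : ℕ) - 1, Nat.lt_of_le_of_lt (Nat.sub_le _ _) r.isLt⟩ else α r))
      * (∑ l ∈ Finset.Iio r, g l) / g r

noncomputable def succGap {K : ℕ} (β : Fin K → ℝ) (r : Fin K) : ℝ :=
  (if h : (r : ℕ) + 1 < K then β ⟨(r : ℕ) + 1, h⟩ else β r) - β r

section succGap

variable {K : ℕ} {β : Fin K → ℝ}

lemma succGap_eq {r r' : Fin K} (h : (r' : ℕ) = r + 1) : succGap β r = β r' - β r := by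
  rw [succGap, dif_pos (h ▸ r'.isLt)]
  congr 2
  exact Fin.ext h.symm

lemma succGap_nonneg (hβ : Monotone β) (r : Fin K) : 0 ≤ succGap β r := by
  unfold succGap
  split_ifs with h
  · exact sub_nonneg.2 (hβ (Fin.mk_le_mk.2 r.val.le_succ))
  · exact (sub_self _).ge

end succGap

section buyerVirtual

variable {K : ℕ} {β f : Fin K → ℝ}

lemma mul_buyerVirtual {r : Fin K} (hr : f r ≠ 0) :
    f r * buyerVirtual K β f r = f r * β r - succGap β r * ∑ l ∈ Ioi r, f l := by
  rw [buyerVirtual, ← succGap]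
  field_simp

lemma buyerVirtual_le (hβ : Monotone β) (hf : ∀ r, 0 ≤ f r) (r : Fin K) :
    buyerVirtual K β f r ≤ β r := by
  rw [buyerVirtual, ← succGap, sub_le_self_iff]
  exact div_nonneg (mul_nonneg (succGap_nonneg hβ r) (sum_nonneg fun l _ => hf l)) (hf r)

end buyerVirtual

lemma sum_Iio_le_of_add_le {K : ℕ} {c u : Fin K → ℝ} (h0 : ∀ r, 0 ≤ u r)
    (hstep : ∀ r r' : Fin K, (r' : ℕ) = r + 1 → u r + c r ≤ u r') (r : Fin K) :
    ∑ l ∈ Iio r, c l ≤ u r := by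
  obtain ⟨n, hn⟩ := r
  induction n with
  | zero =>
    have hmin : IsMin (⟨0, hn⟩ : Fin K) := fun b _ => Fin.mk_le_of_le_val (Nat.zero_le _)
    simpa [hmin.finsetIio_eq] using h0 _
  | succ n ih =>
    set p : Fin K := ⟨n, by omega⟩
    have hIio : Iio (⟨n + 1, hn⟩ : Fin K) = insert p (Iio p) := by
      ext a
      simp only [mem_Iio, mem_insert, Fin.lt_def, Fin.ext_iff, p]
      omega
    rw [hIio, sum_insert notMem_Iio_self]
    linarith [ih p.isLt, hstep p ⟨n + 1, hn⟩ rfl]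

lemma sum_mul_sum_Iio_comm {K : ℕ} (f a : Fin K → ℝ) :
    ∑ r, f r * ∑ l ∈ Iio r, a l = ∑ l, a l * ∑ r ∈ Ioi l, f r := by
  simp_rw [mul_sum]
  rw [sum_comm' (t' := univ) (s' := fun l => Ioi l) (by simp)]
  simp [mul_comm]

theorem sum_mul_le_sum_buyerVirtual_mul {K : ℕ} {β f X P : Fin K → ℝ} (hf : ∀ r, 0 < f r)
    (hIC : ∀ b b', β b * X b' - P b' ≤ β b * X b - P b) (hIR : ∀ b, 0 ≤ β b * X b - P b) :
    ∑ b, f b * P b ≤ ∑ b, f b * buyerVirtual K β f b * X b := by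
  have hrent : ∀ r, ∑ l ∈ Iio r, succGap β l * X l ≤ β r * X r - P r :=
    sum_Iio_le_of_add_le hIR fun r r' h => by
      rw [succGap_eq h]
      linarith [hIC r' r]
  calc ∑ b, f b * P b = ∑ b, f b * (β b * X b) - ∑ b, f b * (β b * X b - P b) := by
        simp only [mul_sub, sum_sub_distrib, sub_sub_cancel]
    _ ≤ ∑ b, f b * (β b * X b) - ∑ b, f b * ∑ l ∈ Iio b, succGap β l * X l :=
        sub_le_sub_left (sum_le_sum fun b _ =>
          mul_le_mul_of_nonneg_left (hrent b) (hf b).le) _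
    _ = ∑ b, f b * buyerVirtual K β f b * X b := by
        rw [sum_mul_sum_Iio_comm, ← sum_sub_distrib]
        refine sum_congr rfl fun b _ => ?_
        rw [mul_buyerVirtual (hf b).ne']
        ring

lemma buyerVirtual_neg_rev {K : ℕ} (α g : Fin K → ℝ) (r : Fin K) :
    buyerVirtual K (fun r => -α r.rev) (fun r => g r.rev) r = -sellerVirtual K α g r.rev := by
  have hsum : ∑ l ∈ Ioi r, g l.rev = ∑ l ∈ Iio r.rev, g l := by
    rw [← Fin.map_revPerm_Ioi, sum_map]
    rfl
  have hpred : (if h : (r : ℕ) + 1 < K then α (⟨(r : ℕ) + 1, h⟩ : Fin K).rev else α r.rev) =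
      if 0 < (r.rev : ℕ) then α ⟨(r.rev : ℕ) - 1, by omega⟩ else α r.rev := by
    split_ifs with h h' h' <;> simp only [Fin.val_rev] at h'
    · rfl
    · omega
    · omega
    · rfl
  rw [buyerVirtual, sellerVirtual, hsum, ← hpred]
  split_ifs <;> ring

/- A seller with costs `α` is a buyer with values `-α` listed in reverse order. -/
theorem sum_sellerVirtual_mul_le_sum_mul {K : ℕ} {α g V Q : Fin K → ℝ} (hg : ∀ r, 0 < g r)
    (hIC : ∀ s s', Q s' - α s * V s' ≤ Q s - α s * V s) (hIR : ∀ s, 0 ≤ Q s - α s * V s) :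
    ∑ s, g s * sellerVirtual K α g s * V s ≤ ∑ s, g s * Q s := by
  have hmirror := sum_mul_le_sum_buyerVirtual_mul (β := fun r => -α r.rev) (f := fun r => g r.rev)
    (X := fun r => V r.rev) (P := fun r => -Q r.rev) (fun r => hg r.rev)
    (fun b b' => by linarith [hIC b.rev b'.rev]) (fun b => by linarith [hIR b.rev])
  simp only [buyerVirtual_neg_rev] at hmirror
  have hQ := Equiv.sum_comp Fin.revPerm fun s => g s * Q s
  have hτ := Equiv.sum_comp Fin.revPerm fun s => g s * sellerVirtual K α g s * V s
  simp only [Fin.revPerm_apply, mul_neg, neg_mul, sum_neg_distrib] at hmirror hQ hτ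
  linarith

lemma le_sellerVirtual {K : ℕ} {α g : Fin K → ℝ} (hα : Monotone α) (hg : ∀ r, 0 ≤ g r)
    (r : Fin K) : α r ≤ sellerVirtual K α g r := by
  have h := buyerVirtual_le (β := fun l => -α l.rev)
    (fun _ _ hab => neg_le_neg (hα (Fin.rev_anti hab))) (fun l => hg l.rev) r.rev
  rw [buyerVirtual_neg_rev, Fin.rev_rev] at h
  simpa using h

section Mechanism

variable {ι : Type*} [Fintype ι]

lemma sum_mul_mul_sub (g x p : ι → ℝ) (v : ℝ) :
    ∑ i, g i * (v * x i - p i) = v * ∑ i, g i * x i - ∑ i, g i * p i := by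
  simp only [mul_sub, sum_sub_distrib, mul_sum, mul_left_comm]

lemma sum_mul_sub_mul (g x p : ι → ℝ) (v : ℝ) :
    ∑ i, g i * (p i - v * x i) = ∑ i, g i * p i - v * ∑ i, g i * x i := by
  simp only [mul_sub, sum_sub_distrib, mul_sum, mul_left_comm]

theorem buyer_payment_le_virtual_value {K : ℕ} {β f : Fin K → ℝ} {g : ι → ℝ}
    {x pB : Fin K → ι → ℝ} (hf : ∀ r, 0 < f r)
    (hIC : ∀ b b', ∑ s, g s * (β b * x b' s - pB b' s) ≤ ∑ s, g s * (β b * x b s - pB b s))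
    (hIR : ∀ b, 0 ≤ ∑ s, g s * (β b * x b s - pB b s)) :
    ∑ b, ∑ s, f b * g s * pB b s ≤ ∑ b, ∑ s, f b * g s * buyerVirtual K β f b * x b s := by
  simp only [sum_mul_mul_sub] at hIC hIR
  have h := sum_mul_le_sum_buyerVirtual_mul hf hIC hIR
  simpa only [mul_sum, mul_assoc, mul_left_comm] using h

theorem seller_virtual_cost_le_payment {K : ℕ} {α g : Fin K → ℝ} {f : ι → ℝ}
    {x pS : ι → Fin K → ℝ} (hg : ∀ r, 0 < g r)
    (hIC : ∀ s s', ∑ b, f b * (pS b s' - α s * x b s') ≤ ∑ b, f b * (pS b s - α s * x b s))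
    (hIR : ∀ s, 0 ≤ ∑ b, f b * (pS b s - α s * x b s)) :
    ∑ b, ∑ s, f b * g s * sellerVirtual K α g s * x b s ≤ ∑ b, ∑ s, f b * g s * pS b s := by
  simp only [sum_mul_sub_mul] at hIC hIR
  have h := sum_sellerVirtual_mul_le_sum_mul hg hIC hIR
  rw [sum_comm, sum_comm (f := fun b s => f b * g s * pS b s)]
  simpa only [mul_sum, mul_assoc, mul_left_comm] using h

end Mechanism

lemma sub_mul_le_ite_add_ite_sub {α β φ τ x : ℝ} (hφ : φ ≤ β) (hτ : α ≤ τ)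
    (hx : x ∈ Set.Icc (0 : ℝ) 1) :
    (β - α) * x ≤ (β - α) * (if α < φ then 1 else 0) + (β - α) * (if τ < β then 1 else 0)
      - (φ - τ) * x := by
  obtain ⟨hx0, hx1⟩ := hx
  split_ifs <;> nlinarith

theorem stmt_7_general (K K' : ℕ)
    (β f : Fin K → ℝ) (hβ : StrictMono β) (hf : ∀ r, 0 < f r)
    (α g : Fin K' → ℝ) (hα : StrictMono α) (hg : ∀ r, 0 < g r)
    (x pB pS : Fin K → Fin K' → ℝ)
    (hx01 : ∀ b s, x b s ∈ Set.Icc (0 : ℝ) 1)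
    (hBICb : ∀ b b' : Fin K,
      ∑ s, g s * (β b * x b' s - pB b' s) ≤ ∑ s, g s * (β b * x b s - pB b s))
    (hBICs : ∀ s s' : Fin K',
      ∑ b, f b * (pS b s' - α s * x b s') ≤ ∑ b, f b * (pS b s - α s * x b s))
    (hIRb : ∀ b : Fin K, 0 ≤ ∑ s, g s * (β b * x b s - pB b s))
    (hIRs : ∀ s : Fin K', 0 ≤ ∑ b, f b * (pS b s - α s * x b s))
    (hWBB : 0 ≤ ∑ b, ∑ s, f b * g s * (pB b s - pS b s)) :
    ∑ b, ∑ s, f b * g s * (β b - α s) * x b s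
      ≤ (∑ b, ∑ s, f b * g s * (β b - α s) *
            (if α s < buyerVirtual K β f b then 1 else 0))
        + (∑ b, ∑ s, f b * g s * (β b - α s) *
            (if sellerVirtual K' α g s < β b then 1 else 0)) := by
  set φ := buyerVirtual K β f
  set τ := sellerVirtual K' α g
  have hpB := buyer_payment_le_virtual_value hf hBICb hIRb
  have hpS := seller_virtual_cost_le_payment hg hBICs hIRs
  have hbudget : ∑ b, ∑ s, f b * g s * pS b s ≤ ∑ b, ∑ s, f b * g s * pB b s := by
    simpa only [mul_sub, sum_sub_distrib, sub_nonneg] using hWBB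
  have hφ := buyerVirtual_le hβ.monotone fun r => (hf r).le
  have hτ := le_sellerVirtual hα.monotone fun r => (hg r).le
  calc _ ≤ ∑ b, ∑ s, (f b * g s * (β b - α s) * (if α s < φ b then 1 else 0)
        + f b * g s * (β b - α s) * (if τ s < β b then 1 else 0)
        - (f b * g s * φ b * x b s - f b * g s * τ s * x b s)) := by
        refine sum_le_sum fun b _ => sum_le_sum fun s _ => ?_
        have h := mul_le_mul_of_nonneg_left (sub_mul_le_ite_add_ite_sub (hφ b) (hτ s) (hx01 b s))
          (mul_pos (hf b) (hg s)).le
        linarith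
    _ ≤ _ := by
        simp only [sum_add_distrib, sum_sub_distrib]
        linarith

/-- in bilateral trading with regular buyer and seller distributions, for any
IR, BIC, ex-ante WBB mechanism `M = (x, pB, pS)`, the GFT of `M` is at most the sum of the
GFT of the Seller-Offering Mechanism (which trades iff `φ(b) > s`) and of the
Buyer-Offering Mechanism (which trades iff `b > τ(s)`). -/
theorem stmt_7 (K K' : ℕ) (hK : 0 < K) (hK' : 0 < K')
    (β f : Fin K → ℝ) (hβ : StrictMono β) (hf : ∀ r, 0 < f r) (hf1 : ∑ r, f r = 1)
    (α g : Fin K' → ℝ) (hα : StrictMono α) (hg : ∀ r, 0 < g r) (hg1 : ∑ r, g r = 1)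
    (hregB : Monotone (buyerVirtual K β f))
    (hregS : Monotone (sellerVirtual K' α g))
    (x pB pS : Fin K → Fin K' → ℝ)
    (hx01 : ∀ b s, x b s ∈ Set.Icc (0 : ℝ) 1)
    (hBICb : ∀ b b' : Fin K,
      ∑ s, g s * (β b * x b' s - pB b' s) ≤ ∑ s, g s * (β b * x b s - pB b s))
    (hBICs : ∀ s s' : Fin K',
      ∑ b, f b * (pS b s' - α s * x b s') ≤ ∑ b, f b * (pS b s - α s * x b s))
    (hIRb : ∀ b : Fin K, 0 ≤ ∑ s, g s * (β b * x b s - pB b s))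
    (hIRs : ∀ s : Fin K', 0 ≤ ∑ b, f b * (pS b s - α s * x b s))
    (hWBB : 0 ≤ ∑ b, ∑ s, f b * g s * (pB b s - pS b s)) :
    ∑ b, ∑ s, f b * g s * (β b - α s) * x b s
      ≤ (∑ b, ∑ s, f b * g s * (β b - α s) *
            (if α s < buyerVirtual K β f b then 1 else 0))
        + (∑ b, ∑ s, f b * g s * (β b - α s) *
            (if sellerVirtual K' α g s < β b then 1 else 0)) :=
  stmt_7_general K K' β f hβ hf α g hα hg x pB pS hx01 hBICb hBICs hIRb hIRs hWBB
end

section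
/- Assume the buyer distribution is regular. For s ∈ T^S with {r : φ(β_r) > s} nonempty, let q_B(s) = min{β_r : φ(β_r) > s}; for b ∈ T^B with {r : α_r ≤ φ(b)} nonempty, let q_S(b) = max{α_r : α_r ≤ φ(b)}. Then Σ_{(b,s) : φ(b) > s} f(b)·g(s)·( q_B(s) − q_S(b) ) ≥ 0; that is, the Generalized Seller-Offering Mechanism in bilateral trading is ex-ante weakly budget balanced. -/
open Finset

/-!
Fix a seller type `s`. By regularity the buyers who trade with `s` form an upper set
`{b ≥ r₀}`, and `q_B(s) = β_{r₀}`. Summation by parts gives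
`Σ_{b ≥ r₀} f(b) φ(b) = β_{r₀} Σ_{b ≥ r₀} f(b)`, so the expected budget against `s` equals
`g(s) Σ_{b ≥ r₀} f(b) (φ(b) − q_S(b))`, which is nonnegative since `q_S(b) ≤ φ(b)`.
-/

theorem Fin.Ioi_castSucc {n : ℕ} (i : Fin n) : Ioi i.castSucc = Ici i.succ := by
  ext; simp [Fin.castSucc_lt_iff_succ_le]

namespace buyerVirtual

variable {n : ℕ} (β f : Fin (n + 1) → ℝ)

theorem last : buyerVirtual (n + 1) β f (Fin.last n) = β (Fin.last n) := by
  simp [buyerVirtual]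

theorem castSucc (i : Fin n) :
    buyerVirtual (n + 1) β f i.castSucc =
      β i.castSucc - (β i.succ - β i.castSucc) * (∑ l ∈ Ici i.succ, f l) / f i.castSucc := by
  simp [buyerVirtual, Fin.Ioi_castSucc, Fin.succ]

end buyerVirtual

theorem sum_Ici_mul_buyerVirtual {K : ℕ} (β f : Fin K → ℝ) (hf : ∀ r, f r ≠ 0) (r₀ : Fin K) :
    ∑ r ∈ Ici r₀, f r * buyerVirtual K β f r = β r₀ * ∑ r ∈ Ici r₀, f r := by
  obtain ⟨n, rfl⟩ : ∃ n, K = n + 1 := Nat.exists_eq_succ_of_ne_zero (Fin.pos r₀).ne'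
  induction r₀ using Fin.reverseInduction with
  | last =>
    rw [← Fin.top_eq_last, Ici_top, sum_singleton, sum_singleton, Fin.top_eq_last, buyerVirtual.last, mul_comm]
  | cast i ih =>
    have hi : i.castSucc ∉ Ici i.succ := by simp
    rw [← Ioi_insert, Fin.Ioi_castSucc, sum_insert hi, sum_insert hi, ih, buyerVirtual.castSucc]
    field_simp [hf i.castSucc]
    ring

theorem Finset.filter_lt_eq_Ici {ι α : Type*} [Preorder ι] [Fintype ι] [LocallyFiniteOrderTop ι]
    [Preorder α] {φ : ι → α} (hφ : Monotone φ) {c : α} [DecidablePred fun r => c < φ r]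
    {r₀ : ι} (hr₀ : c < φ r₀) (hmin : ∀ r, c < φ r → r₀ ≤ r) :
    univ.filter (fun r => c < φ r) = Ici r₀ := by
  ext r
  simp only [mem_filter, mem_univ, true_and, mem_Ici]
  exact ⟨hmin r, fun h => hr₀.trans_le (hφ h)⟩

theorem sum_Ici_mul_sub_nonneg {K : ℕ} (β f : Fin K → ℝ) (hf : ∀ r, 0 < f r) (q : Fin K → ℝ)
    (r₀ : Fin K) (hq : ∀ b ∈ Ici r₀, q b ≤ buyerVirtual K β f b) :
    0 ≤ ∑ b ∈ Ici r₀, f b * (β r₀ - q b) := by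
  have hφ : ∑ b ∈ Ici r₀, f b * (β r₀ - q b) =
      ∑ b ∈ Ici r₀, f b * (buyerVirtual K β f b - q b) := by
    simp only [mul_sub, sum_sub_distrib,
      sum_Ici_mul_buyerVirtual β f (fun r => (hf r).ne') r₀, mul_comm (β r₀), sum_mul]
  rw [hφ]
  exact sum_nonneg fun b hb => mul_nonneg (hf b).le (sub_nonneg.mpr (hq b hb))

theorem stmt_9_general (K K' : ℕ)
    (β f : Fin K → ℝ) (hβ : StrictMono β) (hf : ∀ r, 0 < f r)
    (α g : Fin K' → ℝ) (hg : ∀ r, 0 < g r)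
    (hregB : Monotone (buyerVirtual K β f))
    (qB : Fin K' → ℝ) (qS : Fin K → ℝ)
    (hqB : ∀ s : Fin K', (∃ r : Fin K, α s < buyerVirtual K β f r) →
      ∃ r : Fin K, qB s = β r ∧ α s < buyerVirtual K β f r ∧
        ∀ r' : Fin K, α s < buyerVirtual K β f r' → β r ≤ β r')
    (hqS : ∀ b : Fin K, (∃ r : Fin K', α r ≤ buyerVirtual K β f b) →
      ∃ r : Fin K', qS b = α r ∧ α r ≤ buyerVirtual K β f b ∧
        ∀ r' : Fin K', α r' ≤ buyerVirtual K β f b → α r' ≤ α r) :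
    0 ≤ ∑ b : Fin K, ∑ s ∈ Finset.univ.filter (fun s : Fin K' => α s < buyerVirtual K β f b),
          f b * g s * (qB s - qS b) := by
  simp only [sum_filter]
  rw [sum_comm]
  simp only [← sum_filter]
  refine sum_nonneg fun s _ => ?_
  by_cases htrade : ∃ r, α s < buyerVirtual K β f r
  · obtain ⟨r₀, hqB_eq, hr₀, hmin⟩ := hqB s htrade
    have hqS_le : ∀ b ∈ Ici r₀, qS b ≤ buyerVirtual K β f b := fun b hb => by
      obtain ⟨r, hr, hle, -⟩ := hqS b ⟨s, (hr₀.trans_le (hregB (mem_Ici.mp hb))).le⟩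
      exact hr ▸ hle
    rw [filter_lt_eq_Ici hregB hr₀ fun r hr => hβ.le_iff_le.mp (hmin r hr), hqB_eq]
    have := mul_nonneg (hg s).le (sum_Ici_mul_sub_nonneg β f hf qS r₀ hqS_le)
    rw [mul_sum] at this
    convert this using 2
    ring
  · simp only [not_exists, not_lt] at htrade
    simp [not_lt.mpr (htrade _)]

/-- the Generalized Seller-Offering Mechanism in bilateral trading is
ex-ante weakly budget balanced.  It trades exactly when `φ(b) > s`; the buyer pays the
threshold `qB(s) = min{β_r : φ(β_r) > s}` and the seller receives the threshold
`qS(b) = max{α_r : α_r ≤ φ(b)}`.  Then `Σ_{(b,s): φ(b) > s} f(b)g(s)(qB(s) − qS(b)) ≥ 0`. -/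
theorem stmt_9 (K K' : ℕ) (hK : 0 < K) (hK' : 0 < K')
    (β f : Fin K → ℝ) (hβ : StrictMono β) (hf : ∀ r, 0 < f r) (hf1 : ∑ r, f r = 1)
    (α g : Fin K' → ℝ) (hα : StrictMono α) (hg : ∀ r, 0 < g r) (hg1 : ∑ r, g r = 1)
    (hregB : Monotone (buyerVirtual K β f))
    (qB : Fin K' → ℝ) (qS : Fin K → ℝ)
    (hqB : ∀ s : Fin K', (∃ r : Fin K, α s < buyerVirtual K β f r) →
      ∃ r : Fin K, qB s = β r ∧ α s < buyerVirtual K β f r ∧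
        ∀ r' : Fin K, α s < buyerVirtual K β f r' → β r ≤ β r')
    (hqS : ∀ b : Fin K, (∃ r : Fin K', α r ≤ buyerVirtual K β f b) →
      ∃ r : Fin K', qS b = α r ∧ α r ≤ buyerVirtual K β f b ∧
        ∀ r' : Fin K', α r' ≤ buyerVirtual K β f b → α r' ≤ α r) :
    0 ≤ ∑ b : Fin K, ∑ s ∈ Finset.univ.filter (fun s : Fin K' => α s < buyerVirtual K β f b),
          f b * g s * (qB s - qS b) :=
  stmt_9_general K K' β f hβ hf α g hg hregB qB qS hqB hqS
end
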